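/- Fix an integer N > 1. Let (S₁,…,S_N) be an mKdV tuple of subsets and let i ∈ {1,…,N}. Then there exists a unique KdV subset S̃_i with S̃_i ≠ S_i such that the tuple obtained from (S₁,…,S_N) by replacing the i-th entry S_i with S̃_i is again an mKdV tuple of subsets. -/

import Mathlib

/-- A subset `S ⊆ ℤ` is of virtual cardinal zero if both `S \ ℤ≥0` and `ℤ≥0 \ S`
are finite and have the same cardinality. -/
def VirtualCardZero (S : Set ℤ) : Prop :=
  (S \ {n : ℤ | 0 ≤ n}).Finite ∧ ({n : ℤ | 0 ≤ n} \ S).Finite ∧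
    (S \ {n : ℤ | 0 ≤ n}).ncard = ({n : ℤ | 0 ≤ n} \ S).ncard

/-- The shift `S + k = {s + k : s ∈ S}` of a set of integers. -/
def shiftSet (S : Set ℤ) (k : ℤ) : Set ℤ := (fun s => s + k) '' S

/-- A KdV subset (for a fixed `N`): a subset `S ⊆ ℤ` of virtual cardinal zero
such that `S + N ⊆ S`. -/
def IsKdV (N : ℕ) (S : Set ℤ) : Prop :=
  VirtualCardZero S ∧ shiftSet S N ⊆ S

/-- `A` is the leading term of the KdV subset `S`: `A` is an `N`-element set with
`S = A ∪ (S+N)` and `A ∩ (S+N) = ∅`. -/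
def IsLeadingTerm (N : ℕ) (S : Set ℤ) (A : Finset ℤ) : Prop :=
  A.card = N ∧ (↑A : Set ℤ) ∪ shiftSet S N = S ∧ (↑A : Set ℤ) ∩ shiftSet S N = ∅

/-- The mutation `S[a] = {a+1−N} ∪ (S+1)` of a KdV subset `S` at an element `a`
of its leading term. -/
def mutate (N : ℕ) (S : Set ℤ) (a : ℤ) : Set ℤ :=
  {a + 1 - (N : ℤ)} ∪ shiftSet S 1

/-- An mKdV tuple of subsets: an `N`-tuple `(S₁,…,S_N)` of KdV subsets with
`S_i + 1 ⊆ S_{i+1}` for `i = 1,…,N−1` and `S_N + 1 ⊆ S₁` (i.e. cyclically). -/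
def IsMKdVTuple (N : ℕ) [NeZero N] (T : Fin N → Set ℤ) : Prop :=
  (∀ i, IsKdV N (T i)) ∧ ∀ i : Fin N, shiftSet (T i) 1 ⊆ T (i + 1)

/-!
Put `A = S_{i-1} + 1` and `B = S_{i+1} - 1`. Replacing `S_i` by `S` keeps the tuple mKdV exactly
when `S` is KdV and `A ⊆ S ⊆ B`. Measure sets by their virtual cardinality relative to `ℤ≥0`,
which drops by `k` under a shift by `k`: then `A` has virtual cardinality `-1` and `B` has `1`, so
`B \ A` has two elements, and the sets of virtual cardinality zero between `A` and `B` are the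
`insert z A` with `z ∈ B \ A`. One of them is `S_i`; the other is the unique mutation. The
condition `S + N ⊆ S` comes for free, because going once around the cycle gives `B + N ⊆ A`.
-/

open Set

section RelCard

variable {α : Type*} {R S A B X : Set α}

/-- The virtual cardinality `|S \ R| - |R \ S|` of `S` relative to `R`; only meaningful when
`symmDiff R S` is finite, since `ncard` is `0` on infinite sets. -/
noncomputable def relCard (R S : Set α) : ℤ := (S \ R).ncard - (R \ S).ncard

theorem finite_symmDiff_trans {Q : Set α} (hRQ : (symmDiff R Q).Finite)
    (hQS : (symmDiff Q S).Finite) : (symmDiff R S).Finite :=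
  (hRQ.union hQS).subset (symmDiff_triangle R Q S)

theorem finite_symmDiff_of_subset_of_subset (hAS : A ⊆ S) (hSB : S ⊆ B)
    (hA : (symmDiff R A).Finite) (hB : (symmDiff R B).Finite) : (symmDiff R S).Finite := by
  refine (hA.union hB).subset ?_
  rintro x (⟨hxR, hxS⟩ | ⟨hxS, hxR⟩)
  · exact Or.inl (Or.inl ⟨hxR, fun hxA => hxS (hAS hxA)⟩)
  · exact Or.inr (Or.inr ⟨hSB hxS, hxR⟩)

theorem relCard_image {β : Type*} {f : α → β} (hf : Function.Injective f) (R S : Set α) :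
    relCard (f '' R) (f '' S) = relCard R S := by
  simp only [relCard, ← image_sdiff hf, ncard_image_of_injective _ hf]

theorem relCard_insert {a : α} (ha : a ∉ R) (h : (symmDiff R S).Finite) :
    relCard (insert a R) S = relCard R S - 1 := by
  have hSR : (S \ R).Finite := h.subset subset_union_right
  have hRS : (R \ S).Finite := h.subset subset_union_left
  by_cases haS : a ∈ S
  · have hdiff : S \ insert a R = (S \ R) \ {a} := by
      ext x; simp only [mem_sdiff, mem_insert_iff, mem_singleton_iff]; tauto
    have haSR : a ∈ S \ R := ⟨haS, ha⟩
    have := ncard_sdiff_singleton_add_one haSR hSR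
    simp only [relCard, hdiff, insert_sdiff_of_mem R haS]
    omega
  · simp only [relCard, sdiff_insert_of_notMem haS, insert_sdiff_of_notMem R haS,
      ncard_insert_of_notMem (fun h : a ∈ R \ S => ha h.1) hRS]
    push_cast
    ring

theorem relCard_of_subset (hAS : A ⊆ S) (hA : (symmDiff R A).Finite)
    (hS : (symmDiff R S).Finite) : relCard R S = relCard R A + (S \ A).ncard := by
  have hSR : (S \ R).Finite := hS.subset subset_union_right
  have hRA : (R \ A).Finite := hA.subset subset_union_left
  have hSA : (S \ A).Finite := (hSR.union hRA).subset fun x ⟨hxS, hxA⟩ => by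
    by_cases hxR : x ∈ R
    exacts [Or.inr ⟨hxR, hxA⟩, Or.inl ⟨hxS, hxR⟩]
  have e1 := ncard_inter_add_ncard_sdiff_eq_ncard (S \ R) A hSR
  have e2 := ncard_inter_add_ncard_sdiff_eq_ncard (R \ A) S hRA
  have e3 := ncard_inter_add_ncard_sdiff_eq_ncard (S \ A) R hSA
  rw [show S \ R ∩ A = A \ R by ext x; simp only [mem_inter_iff, mem_sdiff]; grind,
    show (S \ R) \ A = (S \ A) \ R by ext x; simp only [mem_sdiff]; tauto] at e1
  rw [show (R \ A) ∩ S = (S \ A) ∩ R by ext x; simp only [mem_inter_iff, mem_sdiff]; tauto,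
    show (R \ A) \ S = R \ S by ext x; simp only [mem_sdiff]; grind] at e2
  simp only [relCard]
  omega

theorem exists_mem_sdiff_eq_insert (hAS : A ⊆ S) (h : (S \ A).ncard = 1) :
    ∃ z ∈ S \ A, S = insert z A := by
  obtain ⟨z, hz⟩ := ncard_eq_one.mp h
  refine ⟨z, hz ▸ rfl, ?_⟩
  rw [← union_singleton, ← hz, union_sdiff_cancel hAS]

theorem existsUnique_ne_of_ncard_sdiff (hAX : A ⊆ X) (hXB : X ⊆ B)
    (hB : (B \ A).ncard = 2) (hX : (X \ A).ncard = 1) :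
    ∃! S, (A ⊆ S ∧ S ⊆ B ∧ (S \ A).ncard = 1) ∧ S ≠ X := by
  obtain ⟨t, ⟨htX, htA⟩, rfl⟩ := exists_mem_sdiff_eq_insert hAX hX
  obtain ⟨s, hst, hBA⟩ : ∃ s, s ≠ t ∧ B \ A = {t, s} := by
    obtain ⟨x, y, hxy, hBA⟩ := ncard_eq_two.mp hB
    have ht : t ∈ B \ A := ⟨hXB htX, htA⟩
    rw [hBA] at ht
    rcases ht with rfl | rfl
    exacts [⟨y, hxy.symm, hBA⟩, ⟨x, hxy, hBA.trans (pair_comm _ _)⟩]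
  have hsBA : s ∈ B \ A := hBA ▸ Or.inr rfl
  refine ⟨insert s A, ⟨⟨subset_insert s A, insert_subset hsBA.1 (hAX.trans hXB), ?_⟩, ?_⟩, ?_⟩
  · rw [insert_sdiff_eq_singleton hsBA.2, ncard_singleton]
  · intro h
    rcases (h ▸ mem_insert s A : s ∈ insert t A) with h' | h'
    exacts [hst h', hsBA.2 h']
  · rintro S ⟨⟨hAS, hSB, hS⟩, hne⟩
    obtain ⟨z, hz, rfl⟩ := exists_mem_sdiff_eq_insert hAS hS
    have hzBA : z ∈ B \ A := ⟨hSB hz.1, hz.2⟩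
    rw [hBA] at hzBA
    rcases hzBA with rfl | rfl
    exacts [absurd rfl hne, rfl]

end RelCard

section Shift

variable {S R : Set ℤ}

theorem mem_shiftSet {k z : ℤ} : z ∈ shiftSet S k ↔ z - k ∈ S :=
  ⟨by rintro ⟨s, hs, rfl⟩; simpa using hs, fun h => ⟨z - k, h, sub_add_cancel z k⟩⟩

theorem shiftSet_shiftSet (a b : ℤ) : shiftSet (shiftSet S a) b = shiftSet S (a + b) := by
  ext z; simp only [mem_shiftSet, sub_add_eq_sub_sub_swap]

theorem shiftSet_mono {S' : Set ℤ} (h : S ⊆ S') (k : ℤ) : shiftSet S k ⊆ shiftSet S' k :=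
  image_mono h

theorem shiftSet_subset_iff {k : ℤ} : shiftSet S k ⊆ R ↔ S ⊆ shiftSet R (-k) := by
  simp only [subset_def, mem_shiftSet, sub_neg_eq_add]
  exact ⟨fun h z hz => h _ (by simpa using hz), fun h z hz => by simpa using h _ hz⟩

theorem finite_symmDiff_Ici (m n : ℤ) : (symmDiff (Ici m) (Ici n)).Finite :=
  (finite_Icc (min m n) (max m n)).subset fun x hx => by
    simp only [symmDiff_def, sup_eq_union, mem_union, mem_sdiff, mem_Ici] at hx
    simp only [mem_Icc]
    omega

theorem relCard_Ici (hS : (symmDiff (Ici 0) S).Finite) (m : ℤ) :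
    relCard (Ici m) S = relCard (Ici 0) S + m := by
  have step : ∀ m : ℤ, relCard (Ici m) S = relCard (Ici (m + 1)) S - 1 := fun m => by
    have hIci : Ici m = insert m (Ici (m + 1)) := by
      ext x; simp only [mem_insert_iff, mem_Ici]; omega
    rw [hIci, relCard_insert (by simp) (finite_symmDiff_trans (finite_symmDiff_Ici _ 0) hS)]
  induction m using Int.induction_on with
  | zero => simp
  | succ k ih => rw [step k] at ih; omega
  | pred k ih => rw [step, sub_add_cancel]; omega

theorem Ici_zero_eq_shiftSet (k : ℤ) : Ici 0 = shiftSet (Ici (-k)) k := by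
  rw [shiftSet, image_add_const_Ici, neg_add_cancel]

theorem finite_symmDiff_shiftSet (hS : (symmDiff (Ici 0) S).Finite) (k : ℤ) :
    (symmDiff (Ici 0) (shiftSet S k)).Finite := by
  rw [Ici_zero_eq_shiftSet k, shiftSet, shiftSet, ← image_symmDiff (add_left_injective k)]
  exact (finite_symmDiff_trans (finite_symmDiff_Ici _ 0) hS).image _

theorem relCard_shiftSet (hS : (symmDiff (Ici 0) S).Finite) (k : ℤ) :
    relCard (Ici 0) (shiftSet S k) = relCard (Ici 0) S - k := by
  conv_lhs =>
    rw [Ici_zero_eq_shiftSet k, shiftSet, shiftSet, relCard_image (add_left_injective k)]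
  rw [relCard_Ici hS, sub_eq_add_neg]

theorem virtualCardZero_iff :
    VirtualCardZero S ↔ (symmDiff (Ici 0) S).Finite ∧ relCard (Ici 0) S = 0 := by
  change _ ↔ (symmDiff {n : ℤ | 0 ≤ n} S).Finite ∧ _
  simp only [VirtualCardZero, relCard, symmDiff_def, sup_eq_union, finite_union, sub_eq_zero,
    Nat.cast_inj]
  tauto

end Shift

theorem VirtualCardZero.relCard_shiftSet {S : Set ℤ} (h : VirtualCardZero S) (k : ℤ) :
    (symmDiff (Ici 0) (shiftSet S k)).Finite ∧ relCard (Ici 0) (shiftSet S k) = -k := by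
  obtain ⟨hfin, hcard⟩ := virtualCardZero_iff.mp h
  exact ⟨finite_symmDiff_shiftSet hfin k, by rw [_root_.relCard_shiftSet hfin, hcard, zero_sub]⟩

namespace IsMKdVTuple

open Fin.NatCast Fin.CommRing

variable {N : ℕ} [NeZero N] {T : Fin N → Set ℤ}

theorem shiftSet_subset (hT : IsMKdVTuple N T) (k : ℕ) (j : Fin N) :
    shiftSet (T j) k ⊆ T (j + k) := by
  induction k with
  | zero => simp [shiftSet]
  | succ k ih =>
    calc shiftSet (T j) ↑(k + 1) = shiftSet (shiftSet (T j) k) 1 := by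
          rw [shiftSet_shiftSet]; push_cast; rfl
      _ ⊆ shiftSet (T (j + k)) 1 := shiftSet_mono ih 1
      _ ⊆ T (j + k + 1) := hT.2 _
      _ = T (j + ↑(k + 1)) := by push_cast; ring_nf

theorem update_iff (hN : 1 < N) (hT : IsMKdVTuple N T) (i : Fin N) (S : Set ℤ) :
    IsMKdVTuple N (Function.update T i S) ↔
      IsKdV N S ∧ shiftSet (T (i - 1)) 1 ⊆ S ∧ shiftSet S 1 ⊆ T (i + 1) := by
  have hone : (1 : Fin N) ≠ 0 := by rw [Ne, Fin.one_eq_zero_iff]; omega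
  have hsucc : ∀ j : Fin N, j + 1 ≠ j := fun j h => hone (add_eq_left.mp h)
  have hpred : i - 1 ≠ i := fun h => hone (sub_eq_self.mp h)
  constructor
  · intro h
    refine ⟨by simpa using h.1 i, ?_, ?_⟩
    · simpa [Function.update_of_ne hpred] using h.2 (i - 1)
    · simpa [Function.update_of_ne (hsucc i)] using h.2 i
  · rintro ⟨hS, hlo, hhi⟩
    refine ⟨fun j => ?_, fun j => ?_⟩
    · rcases eq_or_ne j i with rfl | hj
      · simpa using hS
      · simpa [Function.update_of_ne hj] using hT.1 j
    · rcases eq_or_ne j i with rfl | hj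
      · simpa [Function.update_of_ne (hsucc j)] using hhi
      rcases eq_or_ne (j + 1) i with rfl | hj1
      · simpa [Function.update_of_ne hj] using hlo
      · simpa [Function.update_of_ne hj, Function.update_of_ne hj1] using hT.2 j

theorem shiftSet_subset_self_of_between (hN : 1 < N) (hT : IsMKdVTuple N T) {i : Fin N}
    {S : Set ℤ} (hlo : shiftSet (T (i - 1)) 1 ⊆ S) (hhi : shiftSet S 1 ⊆ T (i + 1)) :
    shiftSet S N ⊆ S :=
  calc shiftSet S N = shiftSet (shiftSet (shiftSet S 1) (N - 2 : ℕ)) 1 := by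
        rw [shiftSet_shiftSet, shiftSet_shiftSet]; push_cast [Nat.cast_sub hN]; ring_nf
    _ ⊆ shiftSet (shiftSet (T (i + 1)) (N - 2 : ℕ)) 1 := shiftSet_mono (shiftSet_mono hhi _) 1
    _ ⊆ shiftSet (T (i + 1 + (N - 2 : ℕ))) 1 := shiftSet_mono (hT.shiftSet_subset _ _) 1
    _ = shiftSet (T (i - 1)) 1 := by
        rw [Nat.cast_sub hN, Fin.natCast_self]; push_cast; ring_nf
    _ ⊆ S := hlo

theorem isKdV_and_update_iff (hN : 1 < N) (hT : IsMKdVTuple N T) (i : Fin N) (S : Set ℤ) :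
    IsKdV N S ∧ IsMKdVTuple N (Function.update T i S) ↔
      shiftSet (T (i - 1)) 1 ⊆ S ∧ S ⊆ shiftSet (T (i + 1)) (-1) ∧
        (S \ shiftSet (T (i - 1)) 1).ncard = 1 := by
  obtain ⟨hA, hAcard⟩ := (hT.1 (i - 1)).1.relCard_shiftSet 1
  obtain ⟨hB, -⟩ := (hT.1 (i + 1)).1.relCard_shiftSet (-1)
  rw [hT.update_iff hN, shiftSet_subset_iff (S := S)]
  constructor
  · rintro ⟨-, hS, hlo, hhi⟩
    obtain ⟨hSfin, hScard⟩ := virtualCardZero_iff.mp hS.1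
    rw [relCard_of_subset hlo hA hSfin, hAcard] at hScard
    exact ⟨hlo, hhi, by omega⟩
  · rintro ⟨hlo, hhi, hcard⟩
    have hSfin := finite_symmDiff_of_subset_of_subset hlo hhi hA hB
    have hS : IsKdV N S := by
      refine ⟨virtualCardZero_iff.mpr ⟨hSfin, ?_⟩,
        hT.shiftSet_subset_self_of_between hN hlo (shiftSet_subset_iff.mpr hhi)⟩
      rw [relCard_of_subset hlo hA hSfin, hAcard, hcard]
      rfl
    exact ⟨hS, hS, hlo, hhi⟩

theorem ncard_sdiff_eq_two (hT : IsMKdVTuple N T) (i : Fin N) :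
    (shiftSet (T (i + 1)) (-1) \ shiftSet (T (i - 1)) 1).ncard = 2 := by
  obtain ⟨hA, hAcard⟩ := (hT.1 (i - 1)).1.relCard_shiftSet 1
  obtain ⟨hB, hBcard⟩ := (hT.1 (i + 1)).1.relCard_shiftSet (-1)
  have hAB : shiftSet (T (i - 1)) 1 ⊆ shiftSet (T (i + 1)) (-1) :=
    calc shiftSet (T (i - 1)) 1 ⊆ T i := by simpa using hT.2 (i - 1)
      _ ⊆ shiftSet (T (i + 1)) (-1) := shiftSet_subset_iff.mp (hT.2 i)
  have := relCard_of_subset hAB hA hB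
  rw [hAcard, hBcard] at this
  omega

end IsMKdVTuple

/-- Fix `N > 1`.  Let `(S₁,…,S_N)` be an mKdV tuple of subsets and
`i ∈ {1,…,N}`.  Then there is a unique KdV subset `S̃ᵢ ≠ Sᵢ` such that replacing the
`i`-th entry `Sᵢ` by `S̃ᵢ` again yields an mKdV tuple of subsets. -/
theorem mkdv_mutation_exists_unique (N : ℕ) [NeZero N] (hN : 1 < N)
    (T : Fin N → Set ℤ) (hT : IsMKdVTuple N T) (i : Fin N) :
    ∃! S' : Set ℤ, IsKdV N S' ∧ S' ≠ T i ∧ IsMKdVTuple N (Function.update T i S') := by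
  have hchar := hT.isKdV_and_update_iff hN i
  obtain ⟨hlo, hhi, hcard⟩ := (hchar (T i)).mp ⟨hT.1 i, by simpa using hT⟩
  refine (existsUnique_congr fun S => ?_).mp
    (existsUnique_ne_of_ncard_sdiff hlo hhi (hT.ncard_sdiff_eq_two i) hcard)
  rw [← hchar]
  tauto
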